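/- The analytic rank satisfies a restriction Lipschitz property: for any polynomial map φ : F_p^n → F_p^k of degree at most d and sets I, J ⊆ [n], arank_d(φ|_{I∪J}) ≤ arank_d(φ|_I) + |J|. -/
import Mathlib


open Finset

/-- The probability (over uniform `x ∈ F_p^n`) that two polynomial maps
`φ, ψ : F_p^n → F_p^k` agree. -/
noncomputable def agreeProb (p n k : ℕ) [NeZero p]
    (φ ψ : Fin k → MvPolynomial (Fin n) (ZMod p)) : ℝ :=
  ((Finset.univ.filter fun x : Fin n → ZMod p =>
      ∀ i, MvPolynomial.eval x (φ i) = MvPolynomial.eval x (ψ i)).card : ℝ) / (p : ℝ) ^ n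

/-- The analytic rank of a polynomial map `φ : F_p^n → F_p^k` of degree at most `d`:
`arank_d(φ) = −log_p (max_{ψ : deg ψ < d} Pr_x[φ(x) = ψ(x)])`. -/
noncomputable def arank (p n k d : ℕ) [NeZero p]
    (φ : Fin k → MvPolynomial (Fin n) (ZMod p)) : ℝ :=
  - Real.logb p (sSup {r : ℝ | ∃ ψ : Fin k → MvPolynomial (Fin n) (ZMod p),
      (∀ i, (ψ i).totalDegree < d) ∧ r = agreeProb p n k φ ψ})

/-- The restriction `φ|_I` of a polynomial map to the coordinates in `I`:
variables outside `I` are set to zero, i.e. `φ|_I(y) = φ(y_I)`. -/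
noncomputable def restrictMap (p n k : ℕ) (I : Finset (Fin n))
    (φ : Fin k → MvPolynomial (Fin n) (ZMod p)) : Fin k → MvPolynomial (Fin n) (ZMod p) :=
  fun i => MvPolynomial.aeval
    (fun j => if j ∈ I then (MvPolynomial.X j : MvPolynomial (Fin n) (ZMod p)) else 0) (φ i)

/-! ### Auxiliary material -/

lemma my_eval_aeval {p n : ℕ} (x : Fin n → ZMod p) (g : Fin n → MvPolynomial (Fin n) (ZMod p))
    (q : MvPolynomial (Fin n) (ZMod p)) :
    MvPolynomial.eval x (MvPolynomial.aeval g q)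
      = MvPolynomial.eval (fun j => MvPolynomial.eval x (g j)) q := by
  induction q using MvPolynomial.induction_on with
  | C a => simp
  | add q r hq hr =>
    simp only [map_add, hq, hr]
  | mul_X q i hq =>
    simp only [map_mul, hq, MvPolynomial.aeval_X, MvPolynomial.eval_X]

lemma my_totalDegree_aeval_le {p n : ℕ} (g : Fin n → MvPolynomial (Fin n) (ZMod p))
    (hg : ∀ j, (g j).totalDegree ≤ 1) (q : MvPolynomial (Fin n) (ZMod p)) :
    (MvPolynomial.aeval g q).totalDegree ≤ q.totalDegree := by
  conv_lhs => rw [q.as_sum]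
  rw [map_sum]
  refine le_trans (MvPolynomial.totalDegree_finset_sum _ _) ?_
  apply Finset.sup_le
  intro m hm
  rw [MvPolynomial.aeval_monomial]
  refine le_trans (MvPolynomial.totalDegree_mul _ _) ?_
  have h1 : (algebraMap (ZMod p) (MvPolynomial (Fin n) (ZMod p)) (MvPolynomial.coeff m q)).totalDegree = 0 :=
    MvPolynomial.totalDegree_C _
  rw [h1, zero_add]
  refine le_trans (le_trans (MvPolynomial.totalDegree_finset_prod _ _) ?_) (MvPolynomial.le_totalDegree hm)
  refine le_trans (Finset.sum_le_sum (fun j _ => le_trans (MvPolynomial.totalDegree_pow _ _)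
    (by exact Nat.mul_le_mul_left _ (hg j)))) ?_
  simp [Finsupp.sum]

/-- projection of `x` to coordinates in `S` (zero elsewhere). -/
def projF {p n : ℕ} (S : Finset (Fin n)) (x : Fin n → ZMod p) : Fin n → ZMod p :=
  fun j => if j ∈ S then x j else 0

/-- combine: `y` on `I`, `a` off `I`. -/
def combF {p n : ℕ} (I : Finset (Fin n)) (y a : Fin n → ZMod p) : Fin n → ZMod p :=
  fun j => if j ∈ I then y j else a j

lemma eval_restrictMap (p n k : ℕ) (S : Finset (Fin n))
    (φ : Fin k → MvPolynomial (Fin n) (ZMod p)) (i : Fin k) (x : Fin n → ZMod p) :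
    MvPolynomial.eval x (restrictMap p n k S φ i)
      = MvPolynomial.eval (projF S x) (φ i) := by
  rw [restrictMap, my_eval_aeval]
  have : (fun j => MvPolynomial.eval x (if j ∈ S then (MvPolynomial.X j : MvPolynomial (Fin n) (ZMod p)) else 0)) = projF S x := by
    funext j; by_cases h : j ∈ S <;> simp [projF, h]
  rw [this]

/-- substitution: keep variables in `I`, set others to the constants `a`. -/
noncomputable def substF (p n k : ℕ) (I : Finset (Fin n))
    (ψ : Fin k → MvPolynomial (Fin n) (ZMod p)) (a : Fin n → ZMod p) :
    Fin k → MvPolynomial (Fin n) (ZMod p) :=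
  fun i => MvPolynomial.aeval
    (fun j => if j ∈ I then (MvPolynomial.X j : MvPolynomial (Fin n) (ZMod p))
      else MvPolynomial.C (a j)) (ψ i)

lemma eval_substF (p n k : ℕ) (I : Finset (Fin n))
    (ψ : Fin k → MvPolynomial (Fin n) (ZMod p)) (a : Fin n → ZMod p) (i : Fin k)
    (x : Fin n → ZMod p) :
    MvPolynomial.eval x (substF p n k I ψ a i)
      = MvPolynomial.eval (combF I x a) (ψ i) := by
  rw [substF, my_eval_aeval]
  have : (fun j => MvPolynomial.eval x (if j ∈ I then (MvPolynomial.X j : MvPolynomial (Fin n) (ZMod p)) else MvPolynomial.C (a j))) = combF I x a := by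
    funext j; by_cases h : j ∈ I <;> simp [combF, h]
  rw [this]

lemma totalDegree_substF_le (p n k : ℕ) [Fact p.Prime] (I : Finset (Fin n))
    (ψ : Fin k → MvPolynomial (Fin n) (ZMod p)) (a : Fin n → ZMod p) (i : Fin k) :
    ((substF p n k I ψ a i)).totalDegree ≤ (ψ i).totalDegree := by
  refine my_totalDegree_aeval_le _ (fun j => ?_) _
  by_cases h : j ∈ I <;> simp [h, MvPolynomial.totalDegree_X]

def ASet (p n k d : ℕ) [NeZero p] (φ : Fin k → MvPolynomial (Fin n) (ZMod p)) : Set ℝ :=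
  {r : ℝ | ∃ ψ : Fin k → MvPolynomial (Fin n) (ZMod p),
      (∀ i, (ψ i).totalDegree < d) ∧ r = agreeProb p n k φ ψ}

lemma arank_eq (p n k d : ℕ) [NeZero p] (φ : Fin k → MvPolynomial (Fin n) (ZMod p)) :
    arank p n k d φ = - Real.logb p (sSup (ASet p n k d φ)) := rfl

lemma card_fun_eq (p n : ℕ) [NeZero p] : Fintype.card (Fin n → ZMod p) = p ^ n := by
  simp [ZMod.card]

lemma agreeProb_nonneg (p n k : ℕ) [NeZero p]
    (φ ψ : Fin k → MvPolynomial (Fin n) (ZMod p)) : 0 ≤ agreeProb p n k φ ψ := by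
  have : (0:ℝ) < p := by exact_mod_cast Nat.pos_of_ne_zero (NeZero.ne p)
  rw [agreeProb]
  positivity

lemma agreeProb_le_one (p n k : ℕ) [NeZero p]
    (φ ψ : Fin k → MvPolynomial (Fin n) (ZMod p)) : agreeProb p n k φ ψ ≤ 1 := by
  have hp : (0:ℝ) < (p:ℝ) ^ n := by
    have : (0:ℝ) < p := by exact_mod_cast Nat.pos_of_ne_zero (NeZero.ne p)
    positivity
  rw [agreeProb, div_le_one hp]
  calc ((Finset.univ.filter fun x : Fin n → ZMod p =>
      ∀ i, MvPolynomial.eval x (φ i) = MvPolynomial.eval x (ψ i)).card : ℝ)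
      ≤ ((Finset.univ : Finset (Fin n → ZMod p)).card : ℝ) := by
        exact_mod_cast Finset.card_filter_le _ _
    _ = (p:ℝ) ^ n := by rw [Finset.card_univ, card_fun_eq]; push_cast; ring

lemma bddAbove_ASet (p n k d : ℕ) [NeZero p] (φ : Fin k → MvPolynomial (Fin n) (ZMod p)) :
    BddAbove (ASet p n k d φ) := by
  refine ⟨1, fun r hr => ?_⟩
  obtain ⟨ψ, -, rfl⟩ := hr
  exact agreeProb_le_one p n k φ ψ

lemma sSup_ASet_nonneg (p n k d : ℕ) [NeZero p] (φ : Fin k → MvPolynomial (Fin n) (ZMod p)) :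
    0 ≤ sSup (ASet p n k d φ) := by
  refine Real.sSup_nonneg (fun r hr => ?_)
  obtain ⟨ψ, -, rfl⟩ := hr
  exact agreeProb_nonneg p n k φ ψ

lemma exists_mem_ASet (p n k d : ℕ) [NeZero p] (φ : Fin k → MvPolynomial (Fin n) (ZMod p))
    (hd : ∀ _ : Fin k, 0 < d) :
    ∃ r ∈ ASet p n k d φ, 1 / (p:ℝ) ^ n ≤ r := by
  refine ⟨agreeProb p n k φ (fun i => MvPolynomial.C (MvPolynomial.eval 0 (φ i))),
    ⟨_, fun i => by simpa using hd i, rfl⟩, ?_⟩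
  rw [agreeProb]
  have h0 : (0 : Fin n → ZMod p) ∈ (Finset.univ.filter fun x : Fin n → ZMod p =>
      ∀ i, MvPolynomial.eval x (φ i)
        = MvPolynomial.eval x (MvPolynomial.C (MvPolynomial.eval 0 (φ i)))) := by
    simp
  have hc : 1 ≤ ((Finset.univ.filter fun x : Fin n → ZMod p =>
      ∀ i, MvPolynomial.eval x (φ i)
        = MvPolynomial.eval x (MvPolynomial.C (MvPolynomial.eval 0 (φ i)))).card) :=
    Finset.card_pos.mpr ⟨0, h0⟩
  gcongr
  exact_mod_cast hc

lemma sum_count (p n : ℕ) [NeZero p] (I : Finset (Fin n))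
    (Q : (Fin n → ZMod p) → Prop) [DecidablePred Q] :
    ∑ a : Fin n → ZMod p, ∑ y : Fin n → ZMod p, (if Q (combF I y a) then 1 else 0)
      = p ^ n * (Finset.univ.filter Q).card := by
  have einv : Function.Involutive
      (fun z : (Fin n → ZMod p) × (Fin n → ZMod p) => (combF I z.2 z.1, combF I z.1 z.2)) := by
    rintro ⟨a, y⟩
    refine Prod.ext ?_ ?_ <;> funext j <;> by_cases h : j ∈ I <;> simp [combF, h]
  have h2 : (Finset.univ.filter Q).card = ∑ x : Fin n → ZMod p, (if Q x then 1 else 0) := by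
    rw [Finset.card_filter]
  rw [h2]
  have h3 : ∑ a : Fin n → ZMod p, ∑ y : Fin n → ZMod p, (if Q (combF I y a) then 1 else 0)
      = ∑ z : (Fin n → ZMod p) × (Fin n → ZMod p), (if Q (combF I z.2 z.1) then 1 else 0) :=
    (Fintype.sum_prod_type (f := fun z : (Fin n → ZMod p) × (Fin n → ZMod p) => if Q (combF I z.2 z.1) then 1 else 0)).symm
  have h4 : ∑ z : (Fin n → ZMod p) × (Fin n → ZMod p), (if Q (combF I z.2 z.1) then 1 else 0)
      = ∑ z : (Fin n → ZMod p) × (Fin n → ZMod p), (if Q z.1 then 1 else 0) :=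
    Fintype.sum_bijective _ einv.bijective _ _ (fun z => rfl)
  have h5 : ∑ z : (Fin n → ZMod p) × (Fin n → ZMod p), (if Q z.1 then 1 else 0)
      = ∑ x : Fin n → ZMod p, ∑ w : Fin n → ZMod p, (if Q x then 1 else 0) :=
    Fintype.sum_prod_type (f := fun z : (Fin n → ZMod p) × (Fin n → ZMod p) => if Q z.1 then 1 else 0)
  rw [h3, h4, h5]
  have h6 : ∀ x : Fin n → ZMod p, ∑ _w : Fin n → ZMod p, (if Q x then 1 else 0)
      = p ^ n * (if Q x then 1 else 0) := by
    intro x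
    rw [Finset.sum_const, Finset.card_univ, card_fun_eq, smul_eq_mul]
  simp only [h6]
  rw [Finset.mul_sum]

lemma fiber_le (p n : ℕ) [NeZero p] (I J : Finset (Fin n))
    (P R : (Fin n → ZMod p) → Prop) [DecidablePred P] [DecidablePred R]
    (h : ∀ y, P y → R (fun j => if j ∈ J \ I then 0 else y j)) :
    (Finset.univ.filter P).card ≤ p ^ J.card * (Finset.univ.filter R).card := by
  refine Finset.card_le_mul_card_image_of_maps_to
    (f := fun y j => if j ∈ J \ I then 0 else y j) (t := Finset.univ.filter R) ?_ _ ?_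
  · intro y hy
    simp only [Finset.mem_filter, Finset.mem_univ, true_and] at hy ⊢
    exact h y hy
  · intro b _
    have hinj : ((Finset.univ.filter P).filter
        fun y => (fun j => if j ∈ J \ I then 0 else y j) = b).card
        ≤ Fintype.card (↥J → ZMod p) := by
      rw [← Finset.card_univ]
      apply Finset.card_le_card_of_injOn (fun y (j : ↥J) => y j.1)
        (fun _ _ => Finset.mem_univ _)
      intro y1 h1 y2 h2 him
      simp only [Finset.coe_filter, Set.mem_setOf_eq] at h1 h2
      funext j
      by_cases hj : j ∈ J
      · exact congrFun him ⟨j, hj⟩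
      · have hj' : j ∉ J \ I := fun hc => hj (Finset.mem_sdiff.mp hc).1
        have := congrFun (h1.2.trans h2.2.symm) j
        simpa [hj'] using this
    refine le_trans hinj (le_of_eq ?_)
    rw [Fintype.card_fun, Fintype.card_coe, ZMod.card]

lemma main_count (p n : ℕ) [NeZero p] (I J : Finset (Fin n))
    (Q : (Fin n → ZMod p) → Prop) [DecidablePred Q]
    (Rf : (Fin n → ZMod p) → (Fin n → ZMod p) → Prop) [∀ a, DecidablePred (Rf a)]
    (h : ∀ a y, Q (combF I y a) → Rf a (fun j => if j ∈ J \ I then 0 else y j)) :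
    p ^ n * (Finset.univ.filter Q).card
      ≤ p ^ J.card * ∑ a : Fin n → ZMod p, (Finset.univ.filter (Rf a)).card := by
  rw [← sum_count p n I Q, Finset.mul_sum]
  apply Finset.sum_le_sum
  intro a _
  exact le_trans (le_of_eq (Finset.card_filter _ _).symm)
    (fiber_le p n I J _ _ (fun y hy => h a y hy))

lemma key_ineq (p n k d : ℕ) [NeZero p] [Fact p.Prime]
    (φ : Fin k → MvPolynomial (Fin n) (ZMod p)) (I J : Finset (Fin n))
    (ψ : Fin k → MvPolynomial (Fin n) (ZMod p)) (hψ : ∀ i, (ψ i).totalDegree < d) :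
    agreeProb p n k (restrictMap p n k I φ) ψ
      ≤ (p:ℝ) ^ J.card * sSup (ASet p n k d (restrictMap p n k (I ∪ J) φ)) := by
  have hp : p.Prime := Fact.out
  have hp0 : (0:ℝ) < p := by exact_mod_cast hp.pos
  have hpn : (0:ℝ) < (p:ℝ) ^ n := by positivity
  set S₂ := sSup (ASet p n k d (restrictMap p n k (I ∪ J) φ)) with hS₂def
  have hside : ∀ a y : Fin n → ZMod p,
      (∀ i, MvPolynomial.eval (projF I (combF I y a)) (φ i)
        = MvPolynomial.eval (combF I y a) (ψ i)) →
      (∀ i, MvPolynomial.eval (fun j => if j ∈ J \ I then 0 else y j)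
          (restrictMap p n k (I ∪ J) φ i)
        = MvPolynomial.eval (fun j => if j ∈ J \ I then 0 else y j)
          (substF p n k I ψ a i)) := by
    intro a y hy i
    have e1 : projF (I ∪ J) (fun j => if j ∈ J \ I then 0 else y j) = projF I y := by
      funext j
      by_cases hI : j ∈ I
      · simp [projF, hI, Finset.mem_sdiff]
      · by_cases hJ : j ∈ J <;> simp [projF, hI, hJ, Finset.mem_sdiff]
    have e2 : combF I (fun j => if j ∈ J \ I then 0 else y j) a = combF I y a := by
      funext j
      by_cases hI : j ∈ I
      · simp [combF, hI, Finset.mem_sdiff]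
      · simp [combF, hI]
    have e3 : projF I (combF I y a) = projF I y := by
      funext j
      by_cases hI : j ∈ I <;> simp [projF, combF, hI]
    rw [eval_restrictMap, eval_substF, e1, e2, ← e3, hy i]
  have hmain := main_count p n I J
      (Q := fun x => ∀ i, MvPolynomial.eval (projF I x) (φ i) = MvPolynomial.eval x (ψ i))
      (Rf := fun a x => ∀ i, MvPolynomial.eval x (restrictMap p n k (I ∪ J) φ i)
          = MvPolynomial.eval x (substF p n k I ψ a i)) hside
  -- identify the agreeProb numerator with the Q-filter
  have hAeq : (Finset.univ.filter fun x : Fin n → ZMod p =>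
        ∀ i, MvPolynomial.eval x (restrictMap p n k I φ i) = MvPolynomial.eval x (ψ i))
      = (Finset.univ.filter fun x : Fin n → ZMod p =>
        ∀ i, MvPolynomial.eval (projF I x) (φ i) = MvPolynomial.eval x (ψ i)) := by
    apply Finset.filter_congr
    intro x _
    simp only [eval_restrictMap]
  -- each Rf a filter is bounded by p^n * S₂ in ℝ
  have hB : ∀ a : Fin n → ZMod p,
      (((Finset.univ.filter fun x : Fin n → ZMod p =>
        ∀ i, MvPolynomial.eval x (restrictMap p n k (I ∪ J) φ i)
          = MvPolynomial.eval x (substF p n k I ψ a i)).card : ℕ) : ℝ)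
        ≤ (p:ℝ) ^ n * S₂ := by
    intro a
    have hmem : agreeProb p n k (restrictMap p n k (I ∪ J) φ) (substF p n k I ψ a)
        ∈ ASet p n k d (restrictMap p n k (I ∪ J) φ) :=
      ⟨substF p n k I ψ a,
        fun i => lt_of_le_of_lt (totalDegree_substF_le p n k I ψ a i) (hψ i), rfl⟩
    have hle : agreeProb p n k (restrictMap p n k (I ∪ J) φ) (substF p n k I ψ a) ≤ S₂ :=
      le_csSup (bddAbove_ASet p n k d _) hmem
    rw [agreeProb, div_le_iff₀ hpn] at hle
    calc (((Finset.univ.filter fun x : Fin n → ZMod p =>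
        ∀ i, MvPolynomial.eval x (restrictMap p n k (I ∪ J) φ i)
          = MvPolynomial.eval x (substF p n k I ψ a i)).card : ℕ) : ℝ)
        ≤ S₂ * (p:ℝ) ^ n := hle
      _ = (p:ℝ) ^ n * S₂ := by ring
  -- cast hmain to ℝ and combine
  have hmainR : (p:ℝ) ^ n * (((Finset.univ.filter fun x : Fin n → ZMod p =>
        ∀ i, MvPolynomial.eval (projF I x) (φ i) = MvPolynomial.eval x (ψ i)).card : ℕ) : ℝ)
      ≤ (p:ℝ) ^ J.card * ∑ a : Fin n → ZMod p,
        (((Finset.univ.filter fun x : Fin n → ZMod p =>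
        ∀ i, MvPolynomial.eval x (restrictMap p n k (I ∪ J) φ i)
          = MvPolynomial.eval x (substF p n k I ψ a i)).card : ℕ) : ℝ) := by
    exact_mod_cast hmain
  have hsumB : ∑ a : Fin n → ZMod p,
      (((Finset.univ.filter fun x : Fin n → ZMod p =>
        ∀ i, MvPolynomial.eval x (restrictMap p n k (I ∪ J) φ i)
          = MvPolynomial.eval x (substF p n k I ψ a i)).card : ℕ) : ℝ)
      ≤ (p:ℝ) ^ n * ((p:ℝ) ^ n * S₂) := by
    calc ∑ a : Fin n → ZMod p, (((Finset.univ.filter fun x : Fin n → ZMod p =>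
        ∀ i, MvPolynomial.eval x (restrictMap p n k (I ∪ J) φ i)
          = MvPolynomial.eval x (substF p n k I ψ a i)).card : ℕ) : ℝ)
        ≤ ∑ _a : Fin n → ZMod p, (p:ℝ) ^ n * S₂ := Finset.sum_le_sum (fun a _ => hB a)
      _ = (p:ℝ) ^ n * ((p:ℝ) ^ n * S₂) := by
          rw [Finset.sum_const, Finset.card_univ, card_fun_eq, nsmul_eq_mul]
          push_cast
          ring
  have hS₂nonneg : 0 ≤ S₂ := sSup_ASet_nonneg p n k d _
  rw [agreeProb, hAeq, div_le_iff₀ hpn]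
  have hpJ : (0:ℝ) < (p:ℝ) ^ J.card := by positivity
  nlinarith [hmainR, hsumB, hpn, hpJ]

/-- Restriction Lipschitz property of the analytic rank:
`arank_d(φ|_{I∪J}) ≤ arank_d(φ|_I) + |J|` for any polynomial map
`φ : F_p^n → F_p^k` of degree at most `d` and sets `I, J ⊆ [n]`. -/
theorem stmt8 (p n k d : ℕ) [Fact p.Prime]
    (φ : Fin k → MvPolynomial (Fin n) (ZMod p))
    (hφ : ∀ i, (φ i).totalDegree ≤ d) (I J : Finset (Fin n)) :
    arank p n k d (restrictMap p n k (I ∪ J) φ) ≤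
      arank p n k d (restrictMap p n k I φ) + (J.card : ℝ) := by
  have hp : p.Prime := Fact.out
  have hp1 : (1:ℝ) < p := by exact_mod_cast hp.one_lt
  by_cases hcase : k ≠ 0 ∧ d = 0
  · have hempty : ∀ φ' : Fin k → MvPolynomial (Fin n) (ZMod p), ASet p n k d φ' = ∅ := by
      intro φ'
      ext r
      simp only [ASet, Set.mem_setOf_eq, Set.mem_empty_iff_false, iff_false]
      rintro ⟨ψ, hψ, -⟩
      have := hψ ⟨0, Nat.pos_of_ne_zero hcase.1⟩
      omega
    rw [arank_eq, arank_eq, hempty, hempty, Real.sSup_empty, Real.logb_zero]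
    simp only [neg_zero, zero_add]
    positivity
  · have hd : ∀ _ : Fin k, 0 < d := by
      intro i
      by_contra h0
      exact hcase ⟨(Fin.pos i).ne', by omega⟩
    set S₁ := sSup (ASet p n k d (restrictMap p n k I φ)) with h1
    set S₂ := sSup (ASet p n k d (restrictMap p n k (I ∪ J) φ)) with h2
    obtain ⟨r₀, hr₀mem, hr₀⟩ := exists_mem_ASet p n k d (restrictMap p n k I φ) hd
    have hpn : (0:ℝ) < (p:ℝ) ^ n := by positivity
    have hS₁pos : 0 < S₁ := by
      have hle := le_csSup (bddAbove_ASet p n k d (restrictMap p n k I φ)) hr₀mem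
      have : (0:ℝ) < 1 / (p:ℝ) ^ n := by positivity
      rw [h1]
      linarith
    have hS₂nonneg : 0 ≤ S₂ := sSup_ASet_nonneg p n k d _
    have hS₁le : S₁ ≤ (p:ℝ) ^ J.card * S₂ := by
      rw [h1]
      apply Real.sSup_le
      · rintro r ⟨ψ, hψ, rfl⟩
        exact key_ineq p n k d φ I J ψ hψ
      · exact mul_nonneg (by positivity) hS₂nonneg
    have hS₂pos : 0 < S₂ := by
      rcases lt_or_eq_of_le hS₂nonneg with h | h
      · exact h
      · exfalso
        rw [← h] at hS₁le
        simp at hS₁le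
        linarith
    rw [arank_eq, arank_eq, ← h1, ← h2]
    have hlog : Real.logb p S₁ ≤ Real.logb p ((p:ℝ) ^ J.card * S₂) :=
      Real.logb_le_logb_of_le hp1 hS₁pos hS₁le
    have heq : Real.logb p ((p:ℝ) ^ J.card * S₂) = (J.card : ℝ) + Real.logb p S₂ := by
      rw [Real.logb_mul (by positivity) (ne_of_gt hS₂pos), Real.logb_pow,
        Real.logb_self_eq_one hp1]
      ring
    linarith [hlog, heq.symm ▸ hlog]
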